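/- The monic matrix polynomials P̃_n(x) = 2^{-n} [[U_n(x), -U_{n-1}(x)],[-U_{n-1}(x), U_n(x)]], where U_n are Chebyshev polynomials of the second kind, are orthogonal with respect to the weight W(x) = (1/√(1-x²))[[1,x],[x,1]] on (-1,1), with ∫_{-1}^1 P̃_m(x) W(x) P̃_n(x)^T dx = δ_{mn} (π/4^n) Id. -/

import Mathlib

/-!
Writing `w(x) = (1 - x²)^{-1/2}`, the identities `T_m = U_m - x U_{m-1}` and
`T_{m+1} = x U_m - U_{m-1}` give `P̃_m W = 2^{-m} w [[T_m, T_{m+1}], [T_{m+1}, T_m]]`.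
Multiplying by `P̃_nᵀ` and using `U_n T_k - U_{n-1} T_{k+1} = T_{n-k}` (both sides satisfy the
Chebyshev recurrence in `n`) together with the evenness of `T`, one finds
`P̃_m W P̃_nᵀ = 2^{-m-n} w (T_{m-n} Id + T_{m+n+1} [[0,1],[1,0]])`.
The theorem then follows from `∫_{-1}^1 T_k w = π δ_{k0}`, as `m + n + 1 ≠ 0`.
-/

open Matrix Real Polynomial

noncomputable section

attribute [local instance] Matrix.normedAddCommGroup Matrix.normedSpace

/-- The Chebyshev-type matrix weight `W(x) = (1-x²)^{-1/2} [[1,x],[x,1]]`. -/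
def Wcheb (x : ℝ) : Matrix (Fin 2) (Fin 2) ℝ :=
  (Real.sqrt (1 - x ^ 2))⁻¹ • !![1, x; x, 1]

/-- The monic matrix Chebyshev-type polynomials
`P̃_n(x) = 2^{-n} [[U_n(x), -U_{n-1}(x)],[-U_{n-1}(x), U_n(x)]]`,
built from Chebyshev polynomials of the second kind (with `U_{-1} = 0`). -/
def Pcheb (n : ℕ) (x : ℝ) : Matrix (Fin 2) (Fin 2) ℝ :=
  ((2 : ℝ) ^ n)⁻¹ •
    !![(Polynomial.Chebyshev.U ℝ n).eval x, -(Polynomial.Chebyshev.U ℝ ((n : ℤ) - 1)).eval x;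
       -(Polynomial.Chebyshev.U ℝ ((n : ℤ) - 1)).eval x, (Polynomial.Chebyshev.U ℝ n).eval x]

namespace Polynomial.Chebyshev

theorem U_mul_T_sub_U_mul_T (R : Type*) [CommRing R] (m k : ℤ) :
    U R m * T R k - U R (m - 1) * T R (k + 1) = T R (m - k) := by
  induction m using Polynomial.Chebyshev.induct with
  | zero => simp [T_neg]
  | one =>
    rw [U_one, sub_self, U_zero, show (1 : ℤ) - k = -(k - 1) by ring, T_neg, T_sub_one]
    ring
  | add_two n ih1 ih2 =>
    rw [show (n : ℤ) + 1 - 1 = n by ring, show (n : ℤ) + 1 - k = n - k + 1 by ring] at ih1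
    rw [show (n : ℤ) + 2 - 1 = n + 1 by ring, show (n : ℤ) + 2 - k = n - k + 2 by ring]
    linear_combination 2 * X * ih1 - ih2 + T R k * U_add_two R n - T R (k + 1) * U_add_one R n
      - T_add_two R (n - k)
  | neg_add_one n ih1 ih2 =>
    rw [show -(n : ℤ) + 1 - 1 = -n by ring, show -(n : ℤ) + 1 - k = -n - k + 1 by ring] at ih2
    rw [show -(n : ℤ) - 1 - 1 = -n - 2 by ring, show -(n : ℤ) - 1 - k = -n - k - 1 by ring]
    linear_combination 2 * X * ih1 - ih2 + T R k * U_sub_one R (-n)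
      - T R (k + 1) * U_sub_two R (-n) - T_sub_one R (-n - k)

theorem eval_U_mul_eval_T_sub_eval_U_mul_eval_T (R : Type*) [CommRing R] (m k : ℤ) (x : R) :
    (U R m).eval x * (T R k).eval x - (U R (m - 1)).eval x * (T R (k + 1)).eval x =
      (T R (m - k)).eval x := by
  simpa using congrArg (eval x) (U_mul_T_sub_U_mul_T R m k)

theorem intervalIntegrable_eval_T_mul_inv_sqrt_one_sub_sq (k : ℤ) :
    IntervalIntegrable (fun x ↦ (T ℝ k).eval x * (√(1 - x ^ 2))⁻¹)
      MeasureTheory.volume (-1) 1 := by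
  simp_rw [← Real.sqrt_inv]
  exact intervalIntegrable_sqrt_one_sub_sq_inv.continuousOn_mul (T ℝ k).continuousOn

theorem integral_eval_T_mul_inv_sqrt_one_sub_sq (k : ℤ) :
    ∫ x in -1..1, (T ℝ k).eval x * (√(1 - x ^ 2))⁻¹ = if k = 0 then π else 0 := by
  simp_rw [← Real.sqrt_inv]
  rw [← integral_measureT]
  split_ifs with hk
  · subst hk
    exact integral_eval_T_real_measureT_zero
  · exact integral_eval_T_real_measureT_of_ne_zero hk

end Polynomial.Chebyshev

open Polynomial.Chebyshev

theorem Matrix.fin_two_symm_eq_smul_one_add_smul {α : Type*} [Semiring α] (a b : α) :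
    !![a, b; b, a] = a • 1 + b • !![0, 1; 1, 0] := by
  ext i j
  fin_cases i <;> fin_cases j <;> simp

theorem Pcheb_transpose (n : ℕ) (x : ℝ) : (Pcheb n x)ᵀ = Pcheb n x := by
  ext i j
  fin_cases i <;> fin_cases j <;> rfl

theorem Pcheb_mul_Wcheb (m : ℕ) (x : ℝ) :
    Pcheb m x * Wcheb x = (((2 : ℝ) ^ m)⁻¹ * (√(1 - x ^ 2))⁻¹) •
      !![(T ℝ m).eval x, (T ℝ (m + 1)).eval x; (T ℝ (m + 1)).eval x, (T ℝ m).eval x] := by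
  have hT : (T ℝ m).eval x = (U ℝ m).eval x - x * (U ℝ (m - 1)).eval x := by
    simpa using congrArg (eval x) (T_eq_U_sub_X_mul_U ℝ m)
  have hT_succ : (T ℝ (m + 1)).eval x = x * (U ℝ m).eval x - (U ℝ (m - 1)).eval x := by
    have h := T_eq_X_mul_U_sub_U ℝ (m - 1)
    rw [show (m : ℤ) - 1 + 2 = m + 1 by ring, sub_add_cancel] at h
    simpa using congrArg (eval x) h
  rw [Pcheb, Wcheb, smul_mul_smul_comm, mul_fin_two, hT, hT_succ]
  congr 2
  simp only [vecCons_inj, and_true]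
  refine ⟨⟨?_, ?_⟩, ?_, ?_⟩ <;> ring

theorem Pcheb_mul_Wcheb_mul_transpose (m n : ℕ) (x : ℝ) :
    Pcheb m x * Wcheb x * (Pcheb n x)ᵀ = (((2 : ℝ) ^ m)⁻¹ * ((2 : ℝ) ^ n)⁻¹) •
      (((T ℝ ((m : ℤ) - n)).eval x * (√(1 - x ^ 2))⁻¹) • 1 +
       ((T ℝ ((m : ℤ) + n + 1)).eval x * (√(1 - x ^ 2))⁻¹) • !![0, 1; 1, 0]) := by
  have hdiag := eval_U_mul_eval_T_sub_eval_U_mul_eval_T ℝ n m x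
  rw [show (n : ℤ) - m = -(m - n) by ring, T_neg] at hdiag
  -- `T` is even, so `k = -(m + 1)` turns `T_k, T_{k+1}` into `T_{m+1}, T_m`.
  have hoff := eval_U_mul_eval_T_sub_eval_U_mul_eval_T ℝ n (-(m + 1)) x
  rw [T_neg, show -((m : ℤ) + 1) + 1 = -m by ring, T_neg,
    show (n : ℤ) - -(m + 1) = m + n + 1 by ring] at hoff
  rw [← Matrix.fin_two_symm_eq_smul_one_add_smul, Pcheb_mul_Wcheb, Pcheb_transpose, Pcheb,
    smul_mul_smul_comm, mul_fin_two, ← hdiag, ← hoff]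
  simp only [smul_of, smul_cons, smul_eq_mul, smul_empty]
  congr 1
  simp only [vecCons_inj, and_true]
  refine ⟨⟨?_, ?_⟩, ?_, ?_⟩ <;> ring

/-- the monic matrix polynomials `P̃_n` are orthogonal with respect to the
Chebyshev-type weight, with `∫_{-1}^1 P̃_m W P̃_nᵀ dx = δ_{mn} (π/4ⁿ) Id`. -/
theorem Pcheb_orthogonality (m n : ℕ) :
    ∫ x in (-1 : ℝ)..1, Pcheb m x * Wcheb x * (Pcheb n x)ᵀ =
      if m = n then (π / 4 ^ n) • (1 : Matrix (Fin 2) (Fin 2) ℝ) else 0 := by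
  have hint (k : ℤ) := intervalIntegrable_eval_T_mul_inv_sqrt_one_sub_sq k
  simp_rw [Pcheb_mul_Wcheb_mul_transpose]
  rw [intervalIntegral.integral_smul, intervalIntegral.integral_add
      ((hint _).smul_continuousOn continuousOn_const)
      ((hint _).smul_continuousOn continuousOn_const),
    intervalIntegral.integral_smul_const, intervalIntegral.integral_smul_const,
    integral_eval_T_mul_inv_sqrt_one_sub_sq, integral_eval_T_mul_inv_sqrt_one_sub_sq,
    if_neg (by omega : (m : ℤ) + n + 1 ≠ 0), zero_smul, add_zero]
  by_cases h : m = n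
  · subst h
    rw [if_pos (sub_self _), if_pos rfl, smul_smul, ← mul_inv, ← mul_pow, div_eq_inv_mul]
    norm_num
  · rw [if_neg (by omega), if_neg h, zero_smul, smul_zero]
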